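/- arXiv:2409.15540 — 4 statements merged into one kernel-verified Lean document; each statement's English description precedes it below -/
import Mathlib

section
/- Assume (V) and 1≪q≪p≪N. Then every u ∈ X satisfies ∫_{ℝ^N} |u(x)|^{q(x)} dx < ∞, and there exists a constant ℓ > 0 such that |u|_{q(x)} ≤ ℓ‖u‖ for all u ∈ X; that is, the embedding X ↪ L^{q(x)}(ℝ^N) is continuous. -/
open MeasureTheory ENNReal Real Filter Topology Set

noncomputable section

abbrev EucSp (N : ℕ) := EuclideanSpace ℝ (Fin N)

variable {N : ℕ}

/-- `a ≪ b` : the infimum of `b - a` over `ℝ^N` is positive. -/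
def Sll (a b : EucSp N → ℝ) : Prop := 0 < ⨅ x, (b x - a x)

/-- `w` is a weak gradient of `u`. -/
def IsWeakGrad (u : EucSp N → ℝ) (w : EucSp N → EucSp N) : Prop :=
  LocallyIntegrable u volume ∧ LocallyIntegrable w volume ∧
  ∀ φ : EucSp N → ℝ, ContDiff ℝ (⊤ : ℕ∞) φ → HasCompactSupport φ → ∀ i : Fin N,
    ∫ x, u x * fderiv ℝ φ x (EuclideanSpace.single i 1) = - ∫ x, w x i * φ x

/-- `u` (with weak gradient `w`) belongs to the space `X`. -/
def MemX (p V : EucSp N → ℝ) (u : EucSp N → ℝ) (w : EucSp N → EucSp N) : Prop :=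
  Measurable u ∧ IsWeakGrad u w ∧
  ∫⁻ x, (ENNReal.ofReal (‖w x‖ ^ p x) + ENNReal.ofReal (V x * |u x| ^ p x)) < ⊤

/-- The Luxemburg-type norm of the space `X`. -/
def xnorm (p V : EucSp N → ℝ) (u : EucSp N → ℝ) (w : EucSp N → EucSp N) : ℝ :=
  sInf {ξ : ℝ | 0 < ξ ∧
    ∫⁻ x, (ENNReal.ofReal ((‖w x‖ / ξ) ^ p x) + ENNReal.ofReal (V x * (|u x| / ξ) ^ p x)) ≤ 1}

/-- The Luxemburg norm of `L^{r(x)}(Ω)`. -/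
def luxNorm (r : EucSp N → ℝ) (Ω : Set (EucSp N)) (u : EucSp N → ℝ) : ℝ :=
  sInf {ξ : ℝ | 0 < ξ ∧ ∫⁻ x in Ω, ENNReal.ofReal ((|u x| / ξ) ^ r x) ≤ 1}

/-- `G(x,t) = ∫_0^t g(x,τ) dτ`. -/
def primitive (g : EucSp N → ℝ → ℝ) (x : EucSp N) (t : ℝ) : ℝ := ∫ τ in (0:ℝ)..t, g x τ

lemma myIInf_le {α : Type*} [Nonempty α] {f : α → ℝ} (h : 0 < ⨅ x, f x) (x : α) :
    (⨅ y, f y) ≤ f x := by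
  by_cases hb : BddBelow (Set.range f)
  · exact ciInf_le hb x
  · rw [Real.iInf_of_not_bddBelow hb] at h; exact absurd h (lt_irrefl _)

lemma young_pt {a V p q : ℝ} (ha : 0 ≤ a) (hV : 0 < V) (hq : 0 < q) (hqp : q < p) :
    a ^ q ≤ V ^ (-q / (p - q)) + V * a ^ p := by
  by_cases hle : a ^ q ≤ V ^ (-q / (p - q))
  · have : 0 ≤ V * a ^ p := mul_nonneg hV.le (Real.rpow_nonneg ha p)
    linarith
  · push_neg at hle
    have ha0 : 0 < a := by
      rcases lt_or_eq_of_le ha with h | h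
      · exact h
      · exfalso
        rw [← h, Real.zero_rpow hq.ne'] at hle
        exact absurd hle (not_lt.mpr (Real.rpow_nonneg hV.le _))
    have hpq0 : 0 < p - q := by linarith
    have hexp : 0 < (p - q) / q := div_pos hpq0 hq
    have hstep : (V ^ (-q / (p - q))) ^ ((p - q) / q) < (a ^ q) ^ ((p - q) / q) :=
      Real.rpow_lt_rpow (Real.rpow_nonneg hV.le _) hle hexp
    rw [← Real.rpow_mul hV.le, ← Real.rpow_mul ha] at hstep
    have h1 : -q / (p - q) * ((p - q) / q) = -1 := by
      field_simp
    have h2 : q * ((p - q) / q) = p - q := by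
      field_simp
    rw [h1, h2, Real.rpow_neg_one] at hstep
    have h3 : 1 < V * a ^ (p - q) := by
      have := (mul_lt_mul_iff_right₀ hV).mpr hstep
      rwa [mul_inv_cancel₀ hV.ne'] at this
    have h4 : V * a ^ p = (V * a ^ (p - q)) * a ^ q := by
      rw [mul_assoc, ← Real.rpow_add ha0]
      ring_nf
    have h5 : 0 < a ^ q := Real.rpow_pos_of_pos ha0 q
    nlinarith [mul_lt_mul_of_pos_right h3 h5, Real.rpow_nonneg hV.le (-q/(p-q))]

/-- **Lemma 2.2 (continuity part)**: under `(V)` and `1 ≪ q ≪ p ≪ N`, every `u ∈ X`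
belongs to `L^{q(x)}(ℝ^N)`, and there is `ℓ > 0` with `|u|_{q(x)} ≤ ℓ ‖u‖` for all `u ∈ X`;
i.e. the embedding `X ↪ L^{q(x)}(ℝ^N)` is continuous. -/
theorem stmt3
    {N : ℕ} (hN : 2 ≤ N)
    (p q V : EucSp N → ℝ)
    -- exponents : p Lipschitz, q bounded measurable, 1 ≪ q ≪ p ≪ N
    (hLip : ∃ K : NNReal, LipschitzWith K p)
    (hqm : Measurable q) (hqb : ∃ M, ∀ x, |q x| ≤ M)
    (h1q : Sll (fun _ => 1) q) (hqp : Sll q p) (hpN : Sll p (fun _ => (N : ℝ)))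
    -- condition (V)
    (hVc : Continuous V) (hV0 : 0 < ⨅ x, V x)
    (hVint : ∫⁻ x, ENNReal.ofReal (V x ^ (-(q x) / (p x - q x))) < ⊤) :
    (∀ (u : EucSp N → ℝ) (w : EucSp N → EucSp N), MemX p V u w →
      ∫⁻ x, ENNReal.ofReal (|u x| ^ q x) < ⊤) ∧
    ∃ ℓ > (0:ℝ), ∀ (u : EucSp N → ℝ) (w : EucSp N → EucSp N), MemX p V u w →
      luxNorm q Set.univ u ≤ ℓ * xnorm p V u w := by
  obtain ⟨K, hLipK⟩ := hLip
  have hpmeas : Measurable p := hLipK.continuous.measurable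
  have hVmeas : Measurable V := hVc.measurable
  unfold Sll at h1q hqp
  haveI : Nonempty (EucSp N) := ⟨0⟩
  set ε := ⨅ x, (q x - (fun _ : EucSp N => (1:ℝ)) x) with hεd
  set δ := ⨅ x, (p x - q x) with hδd
  have hε : 0 < ε := h1q
  have hδ : 0 < δ := hqp
  have hq1 : ∀ x, 1 + ε ≤ q x := by
    intro x
    have := myIInf_le h1q x
    simp only at this ⊢
    linarith
  have hpq' : ∀ x, q x + δ ≤ p x := by
    intro x
    have := myIInf_le hqp x
    linarith
  have hV_lb : ∀ x, 0 < V x := fun x => lt_of_lt_of_le hV0 (myIInf_le hV0 x)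
  have hqpos : ∀ x, 0 < q x := fun x => by have := hq1 x; linarith
  have hqltp : ∀ x, q x < p x := fun x => by have := hpq' x; linarith
  have hp1 : ∀ x, 1 ≤ p x := fun x => by have := hq1 x; have := hpq' x; linarith
  set f : EucSp N → ℝ≥0∞ := fun x => ENNReal.ofReal (V x ^ (-(q x) / (p x - q x))) with hfd
  have hf : Measurable f := by
    have hfe : f = fun x => ENNReal.ofReal (Real.exp (Real.log (V x) * (-(q x)/(p x - q x)))) := by
      funext x
      rw [hfd]
      simp only
      rw [Real.rpow_def_of_pos (hV_lb x)]
    rw [hfe]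
    exact ENNReal.measurable_ofReal.comp (Real.measurable_exp.comp
      ((Real.measurable_log.comp hVmeas).mul (hqm.neg.div (hpmeas.sub hqm))))
  -- Part 1
  have part1 : ∀ (u : EucSp N → ℝ) (w : EucSp N → EucSp N), MemX p V u w →
      ∫⁻ x, ENNReal.ofReal (|u x| ^ q x) < ⊤ := by
    intro u w hu
    have hpt : ∀ x, ENNReal.ofReal (|u x| ^ q x) ≤ f x + ENNReal.ofReal (V x * |u x| ^ p x) := by
      intro x
      calc ENNReal.ofReal (|u x| ^ q x)
          ≤ ENNReal.ofReal (V x ^ (-(q x) / (p x - q x)) + V x * |u x| ^ p x) :=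
            ENNReal.ofReal_le_ofReal
              (young_pt (abs_nonneg (u x)) (hV_lb x) (hqpos x) (hqltp x))
        _ ≤ f x + ENNReal.ofReal (V x * |u x| ^ p x) := ENNReal.ofReal_add_le
    calc ∫⁻ x, ENNReal.ofReal (|u x| ^ q x)
        ≤ ∫⁻ x, (f x + ENNReal.ofReal (V x * |u x| ^ p x)) := lintegral_mono hpt
      _ = (∫⁻ x, f x) + ∫⁻ x, ENNReal.ofReal (V x * |u x| ^ p x) := lintegral_add_left hf _
      _ ≤ (∫⁻ x, f x) +
          ∫⁻ x, (ENNReal.ofReal (‖w x‖ ^ p x) + ENNReal.ofReal (V x * |u x| ^ p x)) :=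
          add_le_add_right (lintegral_mono fun x => le_add_self) _
      _ < ⊤ := ENNReal.add_lt_top.mpr ⟨hVint, hu.2.2⟩
  refine ⟨part1, ?_⟩
  -- constants
  set C : ℝ≥0∞ := ∫⁻ x, f x with hCd
  have hC : C ≠ ⊤ := hVint.ne
  set D : ℝ := C.toReal + 1 with hDd
  have hD1 : 1 ≤ D := by
    have : 0 ≤ C.toReal := ENNReal.toReal_nonneg
    linarith
  have hDpos : 0 < D := lt_of_lt_of_le one_pos hD1
  set ℓ : ℝ := max 1 (D ^ ((1:ℝ)/(1+ε))) with hℓd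
  have hℓ1 : 1 ≤ ℓ := le_max_left _ _
  have hℓpos : 0 < ℓ := lt_of_lt_of_le one_pos hℓ1
  have hℓq : ∀ x, D ≤ ℓ ^ q x := by
    intro x
    have h1 : D = (D ^ ((1:ℝ)/(1+ε))) ^ (1+ε) := by
      rw [← Real.rpow_mul hDpos.le, one_div_mul_cancel (by linarith : (1:ℝ)+ε ≠ 0),
        Real.rpow_one]
    calc D = (D ^ ((1:ℝ)/(1+ε))) ^ (1+ε) := h1
      _ ≤ ℓ ^ (1+ε) :=
        Real.rpow_le_rpow (Real.rpow_nonneg hDpos.le _) (le_max_right _ _) (by linarith)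
      _ ≤ ℓ ^ q x := Real.rpow_le_rpow_of_exponent_le hℓ1 (hq1 x)
  have hCD : C + 1 = ENNReal.ofReal D := by
    rw [hDd, ENNReal.ofReal_add ENNReal.toReal_nonneg zero_le_one,
      ENNReal.ofReal_toReal hC, ENNReal.ofReal_one]
  have hDle : ENNReal.ofReal (1/D) * (C + 1) ≤ 1 := by
    rw [hCD, ← ENNReal.ofReal_mul (by positivity), one_div,
      inv_mul_cancel₀ hDpos.ne', ENNReal.ofReal_one]
  refine ⟨ℓ, hℓpos, ?_⟩
  intro u w hu
  set S : Set ℝ := {ξ : ℝ | 0 < ξ ∧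
    ∫⁻ x, (ENNReal.ofReal ((‖w x‖ / ξ) ^ p x) + ENNReal.ofReal (V x * (|u x| / ξ) ^ p x)) ≤ 1}
    with hSd
  set I₀ : ℝ≥0∞ := ∫⁻ x, (ENNReal.ofReal (‖w x‖ ^ p x) + ENNReal.ofReal (V x * |u x| ^ p x))
    with hI₀d
  have hI₀ : I₀ ≠ ⊤ := hu.2.2.ne
  set ξ₀ : ℝ := max 1 I₀.toReal with hξ₀d
  have hξ₀1 : 1 ≤ ξ₀ := le_max_left _ _
  have hξ₀pos : 0 < ξ₀ := lt_of_lt_of_le one_pos hξ₀1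
  have hscale : ∀ (a : ℝ), 0 ≤ a → ∀ x, (a/ξ₀) ^ (p x) ≤ ξ₀⁻¹ * a ^ (p x) := by
    intro a ha x
    rw [div_eq_mul_inv, Real.mul_rpow ha (inv_nonneg.mpr hξ₀pos.le)]
    have h1 : (ξ₀⁻¹) ^ (p x) ≤ ξ₀⁻¹ ^ (1:ℝ) :=
      Real.rpow_le_rpow_of_exponent_ge (inv_pos.mpr hξ₀pos) (inv_le_one_of_one_le₀ hξ₀1) (hp1 x)
    rw [Real.rpow_one] at h1
    calc a ^ p x * ξ₀⁻¹ ^ p x ≤ a ^ p x * ξ₀⁻¹ :=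
          mul_le_mul_of_nonneg_left h1 (Real.rpow_nonneg ha _)
      _ = ξ₀⁻¹ * a ^ p x := mul_comm _ _
  have hSne : S.Nonempty := by
    refine ⟨ξ₀, hξ₀pos, ?_⟩
    have hpt : ∀ x, ENNReal.ofReal ((‖w x‖ / ξ₀) ^ p x) + ENNReal.ofReal (V x * (|u x| / ξ₀) ^ p x)
        ≤ ENNReal.ofReal ξ₀⁻¹ *
          (ENNReal.ofReal (‖w x‖ ^ p x) + ENNReal.ofReal (V x * |u x| ^ p x)) := by
      intro x
      rw [mul_add]
      refine add_le_add ?_ ?_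
      · calc ENNReal.ofReal ((‖w x‖ / ξ₀) ^ p x)
            ≤ ENNReal.ofReal (ξ₀⁻¹ * ‖w x‖ ^ p x) :=
              ENNReal.ofReal_le_ofReal (hscale _ (norm_nonneg _) x)
          _ = ENNReal.ofReal ξ₀⁻¹ * ENNReal.ofReal (‖w x‖ ^ p x) :=
              ENNReal.ofReal_mul (inv_nonneg.mpr hξ₀pos.le)
      · calc ENNReal.ofReal (V x * (|u x| / ξ₀) ^ p x)
            ≤ ENNReal.ofReal (ξ₀⁻¹ * (V x * |u x| ^ p x)) := by
              apply ENNReal.ofReal_le_ofReal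
              have := hscale _ (abs_nonneg (u x)) x
              calc V x * (|u x| / ξ₀) ^ p x ≤ V x * (ξ₀⁻¹ * |u x| ^ p x) :=
                    mul_le_mul_of_nonneg_left this (hV_lb x).le
                _ = ξ₀⁻¹ * (V x * |u x| ^ p x) := by ring
          _ = ENNReal.ofReal ξ₀⁻¹ * ENNReal.ofReal (V x * |u x| ^ p x) :=
              ENNReal.ofReal_mul (inv_nonneg.mpr hξ₀pos.le)
    calc ∫⁻ x, (ENNReal.ofReal ((‖w x‖ / ξ₀) ^ p x) + ENNReal.ofReal (V x * (|u x| / ξ₀) ^ p x))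
        ≤ ∫⁻ x, ENNReal.ofReal ξ₀⁻¹ *
            (ENNReal.ofReal (‖w x‖ ^ p x) + ENNReal.ofReal (V x * |u x| ^ p x)) :=
          lintegral_mono hpt
      _ = ENNReal.ofReal ξ₀⁻¹ * I₀ := lintegral_const_mul' _ _ ENNReal.ofReal_ne_top
      _ ≤ ENNReal.ofReal ξ₀⁻¹ * ENNReal.ofReal ξ₀ := by
          apply mul_le_mul_right
          rw [← ENNReal.ofReal_toReal hI₀]
          exact ENNReal.ofReal_le_ofReal (le_max_right _ _)
      _ = 1 := by
          rw [← ENNReal.ofReal_mul (inv_nonneg.mpr hξ₀pos.le), inv_mul_cancel₀ hξ₀pos.ne',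
            ENNReal.ofReal_one]
  have hmem : ∀ ξ ∈ S, luxNorm q Set.univ u ≤ ℓ * ξ := by
    intro ξ hξ
    obtain ⟨hξpos, hξmod⟩ := hξ
    unfold luxNorm
    apply csInf_le ⟨0, fun y hy => hy.1.le⟩
    refine ⟨mul_pos hℓpos hξpos, ?_⟩
    rw [Measure.restrict_univ]
    have hpt : ∀ x, ENNReal.ofReal ((|u x| / (ℓ*ξ)) ^ q x) ≤
        ENNReal.ofReal (1/D) * (f x + ENNReal.ofReal (V x * (|u x|/ξ) ^ p x)) := by
      intro x
      have hb : (0:ℝ) ≤ |u x| / ξ := div_nonneg (abs_nonneg _) hξpos.le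
      have hy := young_pt hb (hV_lb x) (hqpos x) (hqltp x)
      have hRHS0 : 0 ≤ V x ^ (-(q x)/(p x - q x)) + V x * (|u x|/ξ) ^ p x :=
        add_nonneg (Real.rpow_nonneg (hV_lb x).le _)
          (mul_nonneg (hV_lb x).le (Real.rpow_nonneg hb _))
      have he : |u x| / (ℓ*ξ) = (|u x|/ξ)/ℓ := by
        rw [div_div, mul_comm]
      have hr : (|u x| / (ℓ*ξ)) ^ q x = (|u x|/ξ) ^ q x / ℓ ^ q x := by
        rw [he, Real.div_rpow hb hℓpos.le]
      have hred : (|u x|/ξ) ^ q x / ℓ ^ q x ≤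
          (V x ^ (-(q x)/(p x - q x)) + V x * (|u x|/ξ) ^ p x) / D :=
        div_le_div₀ hRHS0 hy hDpos (hℓq x)
      calc ENNReal.ofReal ((|u x| / (ℓ*ξ)) ^ q x)
          ≤ ENNReal.ofReal ((V x ^ (-(q x)/(p x - q x)) + V x * (|u x|/ξ) ^ p x) / D) := by
            rw [hr]; exact ENNReal.ofReal_le_ofReal hred
        _ = ENNReal.ofReal (1/D) *
            ENNReal.ofReal (V x ^ (-(q x)/(p x - q x)) + V x * (|u x|/ξ) ^ p x) := by
            rw [← ENNReal.ofReal_mul (by positivity)]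
            congr 1
            ring
        _ ≤ ENNReal.ofReal (1/D) * (f x + ENNReal.ofReal (V x * (|u x|/ξ) ^ p x)) :=
            mul_le_mul_right ENNReal.ofReal_add_le _
    calc ∫⁻ x, ENNReal.ofReal ((|u x| / (ℓ*ξ)) ^ q x)
        ≤ ∫⁻ x, ENNReal.ofReal (1/D) * (f x + ENNReal.ofReal (V x * (|u x|/ξ) ^ p x)) :=
          lintegral_mono hpt
      _ = ENNReal.ofReal (1/D) * ∫⁻ x, (f x + ENNReal.ofReal (V x * (|u x|/ξ) ^ p x)) :=
          lintegral_const_mul' _ _ ENNReal.ofReal_ne_top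
      _ = ENNReal.ofReal (1/D) * (C + ∫⁻ x, ENNReal.ofReal (V x * (|u x|/ξ) ^ p x)) := by
          rw [lintegral_add_left hf]
      _ ≤ ENNReal.ofReal (1/D) * (C + 1) := by
          apply mul_le_mul_right
          apply add_le_add_right
          calc ∫⁻ x, ENNReal.ofReal (V x * (|u x|/ξ) ^ p x)
              ≤ ∫⁻ x, (ENNReal.ofReal ((‖w x‖ / ξ) ^ p x) +
                  ENNReal.ofReal (V x * (|u x| / ξ) ^ p x)) :=
                lintegral_mono fun x => le_add_self
            _ ≤ 1 := hξmod
      _ ≤ 1 := hDle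
  have h2 : luxNorm q Set.univ u / ℓ ≤ sInf S :=
    le_csInf hSne fun ξ hξ => (div_le_iff₀ hℓpos).mpr (by rw [mul_comm]; exact hmem ξ hξ)
  have hxn : xnorm p V u w = sInf S := rfl
  calc luxNorm q Set.univ u = (luxNorm q Set.univ u / ℓ) * ℓ :=
        (div_mul_cancel₀ _ hℓpos.ne').symm
    _ ≤ sInf S * ℓ := mul_le_mul_of_nonneg_right h2 hℓpos.le
    _ = ℓ * xnorm p V u w := by rw [hxn, mul_comm]


end
end

section
/- Assume (V) and 1≪q≪p≪N. Let (u_n) ⊂ X be a sequence with sup_n ‖u_n‖ < ∞ such that for every R > 0 one has ∫_{|x|<R} |u_n(x)|^{q(x)} dx → 0 as n → ∞. Then ∫_{ℝ^N} |u_n(x)|^{q(x)} dx → 0, i.e. u_n → 0 in L^{q(x)}(ℝ^N). -/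
open MeasureTheory ENNReal Real Filter Topology Set

noncomputable section

variable {N : ℕ}

private lemma ciInf_pos_le' {α : Type*} [Nonempty α] {f : α → ℝ} (h : 0 < ⨅ x, f x) (x : α) :
    (⨅ x, f x) ≤ f x := by
  by_cases hb : BddBelow (Set.range f)
  · exact ciInf_le hb x
  · rw [Real.iInf_of_not_bddBelow hb] at h
    exact absurd h (lt_irrefl 0)

private lemma young_pt_s4 {t v qq pp ε s0 S : ℝ} (ht : 0 ≤ t) (hv : 0 < v)
    (hq : 0 < qq) (hqplt : qq < pp)
    (hε0 : 0 < ε) (hε1 : ε ≤ 1) (hs0le : s0 ≤ pp / qq)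
    (hS : pp / (pp - qq) ≤ S) :
    t ^ qq ≤ ε ^ s0 * (v * t ^ pp) + ε ^ (-S) * v ^ (-qq / (pp - qq)) := by
  have hp : 0 < pp := hq.trans hqplt
  have hpq : 0 < pp - qq := by linarith
  set s : ℝ := pp / qq with hs
  set s' : ℝ := pp / (pp - qq) with hs'
  have hconj : s.HolderConjugate s' := by
    rw [Real.holderConjugate_iff]
    constructor
    · exact (one_lt_div hq).2 hqplt
    · rw [hs, hs']; field_simp; ring
  have hs1 : 1 < s := (Real.holderConjugate_iff.1 hconj).1
  have hs'1 : 1 < s' := (Real.holderConjugate_iff.1 hconj.symm).1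
  set a : ℝ := qq / pp with ha
  set A : ℝ := ε * (v ^ a * t ^ qq) with hA
  set B : ℝ := ε⁻¹ * v ^ (-a) with hB
  have hAnn : 0 ≤ A := by positivity
  have hBnn : 0 ≤ B := by positivity
  have hvv : v ^ a * v ^ (-a) = 1 := by
    rw [← Real.rpow_add hv]; simp
  have hAB : t ^ qq = A * B := by
    have h : A * B = (ε * ε⁻¹) * ((v ^ a * v ^ (-a)) * t ^ qq) := by rw [hA, hB]; ring
    rw [h, mul_inv_cancel₀ hε0.ne', hvv, one_mul, one_mul]
  have h1 : (v ^ a) ^ s = v := by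
    rw [← Real.rpow_mul hv.le]
    have h : a * s = 1 := by rw [ha, hs]; field_simp
    rw [h, Real.rpow_one]
  have h2 : (t ^ qq) ^ s = t ^ pp := by
    rw [← Real.rpow_mul ht]
    congr 1
    rw [hs]; field_simp
  have hAs : A ^ s = ε ^ s * (v * t ^ pp) := by
    rw [hA, Real.mul_rpow hε0.le (by positivity),
      Real.mul_rpow (by positivity) (by positivity), h1, h2]
  have h3 : (v ^ (-a)) ^ s' = v ^ (-qq / (pp - qq)) := by
    rw [← Real.rpow_mul hv.le]
    congr 1
    rw [ha, hs']
    field_simp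
  have hBs : B ^ s' = ε ^ (-s') * v ^ (-qq / (pp - qq)) := by
    rw [hB, Real.mul_rpow (by positivity) (by positivity), h3,
      Real.inv_rpow hε0.le, ← Real.rpow_neg hε0.le]
  calc t ^ qq = A * B := hAB
    _ ≤ A ^ s / s + B ^ s' / s' := Real.young_inequality_of_nonneg hAnn hBnn hconj
    _ ≤ A ^ s + B ^ s' := by
        gcongr
        · exact div_le_self (Real.rpow_nonneg hAnn s) hs1.le
        · exact div_le_self (Real.rpow_nonneg hBnn s') hs'1.le
    _ = ε ^ s * (v * t ^ pp) + ε ^ (-s') * v ^ (-qq / (pp - qq)) := by rw [hAs, hBs]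
    _ ≤ ε ^ s0 * (v * t ^ pp) + ε ^ (-S) * v ^ (-qq / (pp - qq)) :=
        add_le_add
          (mul_le_mul_of_nonneg_right
            (Real.rpow_le_rpow_of_exponent_ge hε0 hε1 hs0le)
            (mul_nonneg hv.le (Real.rpow_nonneg ht pp)))
          (mul_le_mul_of_nonneg_right
            (Real.rpow_le_rpow_of_exponent_ge hε0 hε1 (neg_le_neg hS))
            (Real.rpow_nonneg hv.le _))

private lemma div_rpow_le' {a ξ e : ℝ} (ha : 0 ≤ a) (hξ : 1 ≤ ξ) (he : 1 ≤ e) :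
    (a / ξ) ^ e ≤ ξ⁻¹ * a ^ e := by
  have hξ0 : 0 < ξ := lt_of_lt_of_le one_pos hξ
  have h2 : ξ ≤ ξ ^ e := by
    calc ξ = ξ ^ (1 : ℝ) := (Real.rpow_one ξ).symm
      _ ≤ ξ ^ e := Real.rpow_le_rpow_of_exponent_le hξ he
  rw [Real.div_rpow ha hξ0.le, inv_mul_eq_div]
  exact div_le_div_of_nonneg_left (Real.rpow_nonneg ha e) hξ0 h2

private lemma modular_bound {N : ℕ} (p V : EucSp N → ℝ) (u : EucSp N → ℝ) (w : EucSp N → EucSp N)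
    (hp1 : ∀ x, 1 ≤ p x) (hpN : ∀ x, p x ≤ (N : ℝ)) (hV : ∀ x, 0 ≤ V x)
    (hfin : ∫⁻ x, (ENNReal.ofReal (‖w x‖ ^ p x) + ENNReal.ofReal (V x * |u x| ^ p x)) < ⊤)
    {Mb B : ℝ} (hxn : xnorm p V u w ≤ Mb) (hB1 : 1 ≤ B) (hMB : Mb + 1 ≤ B) :
    ∫⁻ x, ENNReal.ofReal (V x * |u x| ^ p x) ≤ ENNReal.ofReal (B ^ (N : ℝ)) := by
  set S : Set ℝ := {ξ : ℝ | 0 < ξ ∧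
    ∫⁻ x, (ENNReal.ofReal ((‖w x‖ / ξ) ^ p x) + ENNReal.ofReal (V x * (|u x| / ξ) ^ p x)) ≤ 1}
    with hS
  set I : ℝ≥0∞ := ∫⁻ x, (ENNReal.ofReal (‖w x‖ ^ p x) + ENNReal.ofReal (V x * |u x| ^ p x))
    with hI
  set ξ0 : ℝ := max 1 I.toReal with hξ0
  have hξ01 : 1 ≤ ξ0 := le_max_left _ _
  have hξ0pos : 0 < ξ0 := lt_of_lt_of_le one_pos hξ01
  have hmem0 : ξ0 ∈ S := by
    refine ⟨hξ0pos, ?_⟩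
    have hpoint : ∀ x,
        ENNReal.ofReal ((‖w x‖ / ξ0) ^ p x) + ENNReal.ofReal (V x * (|u x| / ξ0) ^ p x)
          ≤ ENNReal.ofReal ξ0⁻¹ *
            (ENNReal.ofReal (‖w x‖ ^ p x) + ENNReal.ofReal (V x * |u x| ^ p x)) := by
      intro x
      have h1 : (‖w x‖ / ξ0) ^ p x ≤ ξ0⁻¹ * ‖w x‖ ^ p x :=
        div_rpow_le' (norm_nonneg _) hξ01 (hp1 x)
      have h2 : V x * (|u x| / ξ0) ^ p x ≤ ξ0⁻¹ * (V x * |u x| ^ p x) := by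
        calc V x * (|u x| / ξ0) ^ p x ≤ V x * (ξ0⁻¹ * |u x| ^ p x) :=
              mul_le_mul_of_nonneg_left (div_rpow_le' (abs_nonneg _) hξ01 (hp1 x)) (hV x)
          _ = ξ0⁻¹ * (V x * |u x| ^ p x) := by ring
      calc ENNReal.ofReal ((‖w x‖ / ξ0) ^ p x) + ENNReal.ofReal (V x * (|u x| / ξ0) ^ p x)
          ≤ ENNReal.ofReal (ξ0⁻¹ * ‖w x‖ ^ p x) + ENNReal.ofReal (ξ0⁻¹ * (V x * |u x| ^ p x)) :=
            add_le_add (ENNReal.ofReal_le_ofReal h1) (ENNReal.ofReal_le_ofReal h2)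
        _ = ENNReal.ofReal ξ0⁻¹ *
              (ENNReal.ofReal (‖w x‖ ^ p x) + ENNReal.ofReal (V x * |u x| ^ p x)) := by
            rw [ENNReal.ofReal_mul (inv_nonneg.2 hξ0pos.le),
              ENNReal.ofReal_mul (inv_nonneg.2 hξ0pos.le), mul_add]
    calc ∫⁻ x, (ENNReal.ofReal ((‖w x‖ / ξ0) ^ p x) + ENNReal.ofReal (V x * (|u x| / ξ0) ^ p x))
        ≤ ∫⁻ x, ENNReal.ofReal ξ0⁻¹ *
            (ENNReal.ofReal (‖w x‖ ^ p x) + ENNReal.ofReal (V x * |u x| ^ p x)) :=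
          lintegral_mono hpoint
      _ = ENNReal.ofReal ξ0⁻¹ * I := lintegral_const_mul' _ _ ENNReal.ofReal_ne_top
      _ ≤ ENNReal.ofReal ξ0⁻¹ * ENNReal.ofReal ξ0 := by
          refine mul_le_mul_right ?_ _
          rw [← ENNReal.ofReal_toReal hfin.ne]
          exact ENNReal.ofReal_le_ofReal (le_max_right _ _)
      _ = 1 := by
          rw [← ENNReal.ofReal_mul (inv_nonneg.2 hξ0pos.le), inv_mul_cancel₀ hξ0pos.ne',
            ENNReal.ofReal_one]
  obtain ⟨ξ, hξmem, hξlt⟩ := Real.lt_sInf_add_pos ⟨ξ0, hmem0⟩ one_pos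
  obtain ⟨hξpos, hξmod⟩ := hξmem
  have hxneq : xnorm p V u w = sInf S := rfl
  have hξB : ξ ≤ B := by
    rw [← hxneq] at hξlt
    linarith
  have key : ∀ x, V x * |u x| ^ p x ≤ B ^ (N : ℝ) * (V x * (|u x| / ξ) ^ p x) := by
    intro x
    have hξp : ξ ^ p x ≤ B ^ (N : ℝ) :=
      le_trans (Real.rpow_le_rpow hξpos.le hξB (le_trans zero_le_one (hp1 x)))
        (Real.rpow_le_rpow_of_exponent_le hB1 (hpN x))
    have hδ : (|u x| / ξ) ^ p x = |u x| ^ p x / ξ ^ p x :=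
      Real.div_rpow (abs_nonneg _) hξpos.le _
    have hne : ξ ^ p x ≠ 0 := (Real.rpow_pos_of_pos hξpos _).ne'
    calc V x * |u x| ^ p x = ξ ^ p x * (V x * (|u x| ^ p x / ξ ^ p x)) := by
          field_simp
        _ ≤ B ^ (N : ℝ) * (V x * (|u x| ^ p x / ξ ^ p x)) :=
          mul_le_mul_of_nonneg_right hξp
            (mul_nonneg (hV x) (div_nonneg (Real.rpow_nonneg (abs_nonneg _) _)
              (Real.rpow_nonneg hξpos.le _)))
        _ = B ^ (N : ℝ) * (V x * (|u x| / ξ) ^ p x) := by rw [hδ]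
  calc ∫⁻ x, ENNReal.ofReal (V x * |u x| ^ p x)
      ≤ ∫⁻ x, ENNReal.ofReal (B ^ (N : ℝ)) * ENNReal.ofReal (V x * (|u x| / ξ) ^ p x) := by
        refine lintegral_mono fun x => ?_
        rw [← ENNReal.ofReal_mul (Real.rpow_nonneg (le_trans zero_le_one hB1) _)]
        exact ENNReal.ofReal_le_ofReal (key x)
    _ = ENNReal.ofReal (B ^ (N : ℝ)) * ∫⁻ x, ENNReal.ofReal (V x * (|u x| / ξ) ^ p x) :=
        lintegral_const_mul' _ _ ENNReal.ofReal_ne_top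
    _ ≤ ENNReal.ofReal (B ^ (N : ℝ)) * 1 :=
        mul_le_mul_right (le_trans (lintegral_mono fun x => le_add_self) hξmod) _
    _ = ENNReal.ofReal (B ^ (N : ℝ)) := mul_one _

/-- **Lemma 2.2 (compactness part)**: under `(V)` and `1 ≪ q ≪ p ≪ N`, if `(uₙ) ⊂ X` is a
bounded sequence such that `∫_{|x|<R} |uₙ|^{q(x)} → 0` for every `R > 0`, then
`∫_{ℝ^N} |uₙ|^{q(x)} → 0`, i.e. `uₙ → 0` in `L^{q(x)}(ℝ^N)`. -/
theorem stmt4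
    {N : ℕ} (hN : 2 ≤ N)
    (p q V : EucSp N → ℝ)
    -- exponents : p Lipschitz, q bounded measurable, 1 ≪ q ≪ p ≪ N
    (hLip : ∃ K : NNReal, LipschitzWith K p)
    (hqm : Measurable q) (hqb : ∃ M, ∀ x, |q x| ≤ M)
    (h1q : Sll (fun _ => 1) q) (hqp : Sll q p) (hpN : Sll p (fun _ => (N : ℝ)))
    -- condition (V)
    (hVc : Continuous V) (hV0 : 0 < ⨅ x, V x)
    (hVint : ∫⁻ x, ENNReal.ofReal (V x ^ (-(q x) / (p x - q x))) < ⊤)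
    -- the sequence
    (u : ℕ → EucSp N → ℝ) (w : ℕ → EucSp N → EucSp N)
    (hmem : ∀ n, MemX p V (u n) (w n))
    (hbd : ∃ M : ℝ, ∀ n, xnorm p V (u n) (w n) ≤ M)
    (hloc : ∀ R > (0:ℝ),
      Tendsto (fun n => ∫⁻ x in {x : EucSp N | ‖x‖ < R}, ENNReal.ofReal (|u n x| ^ q x))
        atTop (𝓝 0)) :
    Tendsto (fun n => ∫⁻ x, ENNReal.ofReal (|u n x| ^ q x)) atTop (𝓝 0) := by
  classical
  obtain ⟨Mb, hMb⟩ := hbd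
  obtain ⟨K, hK⟩ := hLip
  obtain ⟨Mq0, hMq0⟩ := hqb
  have hpm : Measurable p := hK.continuous.measurable
  have hum : ∀ n, Measurable (u n) := fun n => (hmem n).1
  -- pointwise consequences of the `Sll` hypotheses
  have hq1 : ∀ x, 1 ≤ q x := by
    intro x
    have h := lt_of_lt_of_le h1q (ciInf_pos_le' h1q x)
    simp only [] at h
    linarith
  have hq0 : ∀ x, 0 < q x := fun x => lt_of_lt_of_le one_pos (hq1 x)
  set δ : ℝ := ⨅ x, (p x - q x) with hδdef
  have hδpos : 0 < δ := hqp
  have hδle : ∀ x, δ ≤ p x - q x := fun x => ciInf_pos_le' hqp x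
  have hqplt : ∀ x, q x < p x := fun x => by have := hδle x; linarith
  have hp1 : ∀ x, 1 ≤ p x := fun x => le_trans (hq1 x) (hqplt x).le
  have hple : ∀ x, p x ≤ (N : ℝ) := by
    intro x
    have h := lt_of_lt_of_le hpN (ciInf_pos_le' hpN x)
    simp only [] at h
    linarith
  have hVpos : ∀ x, 0 < V x := fun x => lt_of_lt_of_le hV0 (ciInf_pos_le' hV0 x)
  set Mq : ℝ := max Mq0 1 with hMqdef
  have hMqpos : 0 < Mq := lt_of_lt_of_le one_pos (le_max_right _ _)
  have hqle : ∀ x, q x ≤ Mq :=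
    fun x => le_trans (le_trans (le_abs_self _) (hMq0 x)) (le_max_left _ _)
  -- step A : uniform modular bound
  set B : ℝ := max 1 (Mb + 1) with hBdef
  have hB1 : (1 : ℝ) ≤ B := le_max_left _ _
  set C0 : ℝ≥0∞ := ENNReal.ofReal (B ^ (N : ℝ)) with hC0def
  have hC0ne0 : C0 ≠ 0 := by
    rw [hC0def]
    exact (ENNReal.ofReal_pos.2 (Real.rpow_pos_of_pos (lt_of_lt_of_le one_pos hB1) _)).ne'
  have hmod : ∀ n, ∫⁻ x, ENNReal.ofReal (V x * |u n x| ^ p x) ≤ C0 := fun n =>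
    modular_bound p V (u n) (w n) hp1 hple (fun x => (hVpos x).le) (hmem n).2.2 (hMb n) hB1
      (le_max_right _ _)
  -- the density `g` and the tail measure
  set g : EucSp N → ℝ≥0∞ := fun x => ENNReal.ofReal (V x ^ (-(q x) / (p x - q x))) with hgdef
  have hgm : Measurable g :=
    ENNReal.measurable_ofReal.comp (hVc.measurable.pow ((hqm.neg).div (hpm.sub hqm)))
  set A : ℕ → Set (EucSp N) := fun k => {x : EucSp N | (k : ℝ) ≤ ‖x‖} with hAdef
  have hAm : ∀ k, MeasurableSet (A k) :=
    fun k => (isClosed_le continuous_const continuous_norm).measurableSet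
  have hAanti : Antitone A := by
    intro k m hkm x hx
    simp only [hAdef, mem_setOf_eq] at hx ⊢
    exact le_trans (Nat.cast_le.2 hkm) hx
  have hAempty : (⋂ k, A k) = ∅ := by
    ext x
    simp only [mem_iInter, mem_setOf_eq, mem_empty_iff_false, iff_false, not_forall, not_le,
      hAdef]
    exact exists_nat_gt ‖x‖
  set ν : Measure (EucSp N) := volume.withDensity g with hνdef
  have hνA : ∀ k, ν (A k) = ∫⁻ x in A k, g x := fun k => withDensity_apply g (hAm k)
  have hνfin : ν (A 0) ≠ ⊤ := by
    rw [hνA]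
    exact (lt_of_le_of_lt (setLIntegral_le_lintegral _ _) hVint).ne
  have htail : Tendsto (fun k => ν (A k)) atTop (𝓝 0) := by
    have h := tendsto_measure_iInter_atTop (μ := ν)
      (fun k => (hAm k).nullMeasurableSet) hAanti ⟨0, hνfin⟩
    rw [hAempty] at h
    simpa [Function.comp_def] using h
  -- main argument
  rw [ENNReal.tendsto_nhds_zero]
  intro ε' hε'
  set η : ℝ≥0∞ := min ε' 1 with hηdef
  have hη0 : η ≠ 0 := (lt_min hε' zero_lt_one).ne'
  have hηtop : η ≠ ⊤ := ne_top_of_le_ne_top one_ne_top (min_le_right _ _)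
  set η3 : ℝ≥0∞ := η / 3 with hη3def
  have h3ne0 : (3 : ℝ≥0∞) ≠ 0 := by norm_num
  have h3netop : (3 : ℝ≥0∞) ≠ ⊤ := by norm_num
  have hη3pos : 0 < η3 := ENNReal.div_pos hη0 h3netop
  have hη3top : η3 ≠ ⊤ := (ENNReal.div_lt_top hηtop h3ne0).ne
  set r : ℝ := (η3 / C0).toReal with hrdef
  have hrpos : 0 < r :=
    ENNReal.toReal_pos (ENNReal.div_pos hη3pos.ne' ENNReal.ofReal_ne_top).ne'
      (ENNReal.div_lt_top hη3top hC0ne0).ne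
  set εr : ℝ := min r 1 with hεrdef
  have hεr0 : 0 < εr := lt_min hrpos one_pos
  have hεr1 : εr ≤ 1 := min_le_right _ _
  -- the exponents s0 and S
  set s0 : ℝ := 1 + δ / Mq with hs0def
  have hs01 : 1 ≤ s0 := le_add_of_nonneg_right (div_nonneg hδpos.le hMqpos.le)
  have hs0le : ∀ x, s0 ≤ p x / q x := by
    intro x
    have h1 : δ / Mq ≤ (p x - q x) / q x :=
      div_le_div₀ (by linarith [hδle x, hδpos]) (hδle x) (hq0 x) (hqle x)
    have hqx : q x ≠ 0 := (hq0 x).ne'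
    have h2 : p x / q x = 1 + (p x - q x) / q x := by field_simp; ring
    rw [hs0def, h2]
    linarith
  set S : ℝ := (N : ℝ) / δ with hSdef
  have hSle : ∀ x, p x / (p x - q x) ≤ S := fun x =>
    div_le_div₀ (Nat.cast_nonneg N) (hple x) hδpos (hδle x)
  -- first summand small
  have hεs0 : ENNReal.ofReal (εr ^ s0) * C0 ≤ η3 := by
    have h1 : εr ^ s0 ≤ r := by
      calc εr ^ s0 ≤ εr ^ (1 : ℝ) := Real.rpow_le_rpow_of_exponent_ge hεr0 hεr1 hs01
        _ = εr := Real.rpow_one _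
        _ ≤ r := min_le_left _ _
    calc ENNReal.ofReal (εr ^ s0) * C0 ≤ ENNReal.ofReal r * C0 :=
          mul_le_mul_left (ENNReal.ofReal_le_ofReal h1) _
      _ = η3 / C0 * C0 := by
          rw [hrdef, ENNReal.ofReal_toReal (ENNReal.div_lt_top hη3top hC0ne0).ne]
      _ = C0 * (η3 / C0) := mul_comm _ _
      _ ≤ η3 := ENNReal.mul_div_le
  -- choose the radius k
  set c : ℝ≥0∞ := ENNReal.ofReal (εr ^ (-S)) with hcdef
  have hcne : c ≠ ⊤ := ENNReal.ofReal_ne_top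
  have hbound : 0 < η3 / c := ENNReal.div_pos hη3pos.ne' hcne
  obtain ⟨k, hk1, hk2⟩ :=
    ((htail.eventually_lt_const hbound).and (eventually_ge_atTop 1)).exists
  have hkpos : (0 : ℝ) < (k : ℝ) := by exact_mod_cast hk2
  -- the tail bound, uniform in n
  have htailb : ∀ n, ∫⁻ x in A k, ENNReal.ofReal (|u n x| ^ q x) ≤ η3 + η3 := by
    intro n
    have hpt : ∀ x, ENNReal.ofReal (|u n x| ^ q x) ≤
        ENNReal.ofReal (εr ^ s0) * ENNReal.ofReal (V x * |u n x| ^ p x) + c * g x := by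
      intro x
      have hy := young_pt_s4 (abs_nonneg (u n x)) (hVpos x) (hq0 x) (hqplt x) hεr0 hεr1
        (hs0le x) (hSle x)
      calc ENNReal.ofReal (|u n x| ^ q x)
          ≤ ENNReal.ofReal (εr ^ s0 * (V x * |u n x| ^ p x) +
              εr ^ (-S) * V x ^ (-(q x) / (p x - q x))) := ENNReal.ofReal_le_ofReal hy
        _ = ENNReal.ofReal (εr ^ s0) * ENNReal.ofReal (V x * |u n x| ^ p x) + c * g x := by
            have ha1 : 0 ≤ εr ^ s0 * (V x * |u n x| ^ p x) :=
              mul_nonneg (Real.rpow_nonneg hεr0.le _)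
                (mul_nonneg (hVpos x).le (Real.rpow_nonneg (abs_nonneg _) _))
            have ha2 : 0 ≤ εr ^ (-S) * V x ^ (-(q x) / (p x - q x)) :=
              mul_nonneg (Real.rpow_nonneg hεr0.le _) (Real.rpow_nonneg (hVpos x).le _)
            rw [ENNReal.ofReal_add ha1 ha2,
              ENNReal.ofReal_mul (Real.rpow_nonneg hεr0.le s0),
              ENNReal.ofReal_mul (Real.rpow_nonneg hεr0.le (-S))]
    have hf1m : Measurable fun x =>
        ENNReal.ofReal (εr ^ s0) * ENNReal.ofReal (V x * |u n x| ^ p x) :=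
      (ENNReal.measurable_ofReal.comp (hVc.measurable.mul ((hum n).abs.pow hpm))).const_mul _
    calc ∫⁻ x in A k, ENNReal.ofReal (|u n x| ^ q x)
        ≤ ∫⁻ x in A k, (ENNReal.ofReal (εr ^ s0) * ENNReal.ofReal (V x * |u n x| ^ p x)
            + c * g x) := lintegral_mono hpt
      _ = (∫⁻ x in A k, ENNReal.ofReal (εr ^ s0) * ENNReal.ofReal (V x * |u n x| ^ p x))
            + ∫⁻ x in A k, c * g x := lintegral_add_left hf1m _
      _ ≤ ENNReal.ofReal (εr ^ s0) * (∫⁻ x, ENNReal.ofReal (V x * |u n x| ^ p x))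
            + c * ν (A k) := by
          refine add_le_add ?_ ?_
          · rw [lintegral_const_mul' _ _ ENNReal.ofReal_ne_top]
            exact mul_le_mul_right (setLIntegral_le_lintegral _ _) _
          · rw [lintegral_const_mul' _ _ hcne, hνA]
      _ ≤ ENNReal.ofReal (εr ^ s0) * C0 + c * (η3 / c) :=
          add_le_add (mul_le_mul_right (hmod n) _) (mul_le_mul_right hk1.le _)
      _ ≤ η3 + η3 := add_le_add hεs0 ENNReal.mul_div_le
  -- put things together
  have hballm : MeasurableSet {x : EucSp N | ‖x‖ < (k : ℝ)} :=
    (isOpen_lt continuous_norm continuous_const).measurableSet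
  have hcompl : {x : EucSp N | ‖x‖ < (k : ℝ)}ᶜ = A k := by
    ext x
    simp [hAdef, not_lt]
  filter_upwards [(hloc (k : ℝ) hkpos).eventually_lt_const hη3pos] with n hn
  have hsplit := lintegral_add_compl (μ := volume)
    (fun x => ENNReal.ofReal (|u n x| ^ q x)) hballm
  calc ∫⁻ x, ENNReal.ofReal (|u n x| ^ q x)
      = (∫⁻ x in {x : EucSp N | ‖x‖ < (k : ℝ)}, ENNReal.ofReal (|u n x| ^ q x))
        + ∫⁻ x in {x : EucSp N | ‖x‖ < (k : ℝ)}ᶜ, ENNReal.ofReal (|u n x| ^ q x) :=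
        hsplit.symm
    _ ≤ η3 + (η3 + η3) := by
        rw [hcompl]
        exact add_le_add hn.le (htailb n)
    _ = 3 * (η / 3) := by rw [hη3def]; ring
    _ = η := ENNReal.mul_div_cancel h3ne0 h3netop
    _ ≤ ε' := min_le_left _ _

end
end

section
/- Assume (V) and 1≪q≪p≪N. Then for every ε ∈ (0,1) there exists R > 0 such that the Luxemburg norm of the function x ↦ V(x)^{−q(x)/p(x)} with exponent p(x)/(p(x)−q(x)) over the set {|x| ≥ R} is at most ε; that is, inf{ξ>0 : ∫_{|x|≥R} (V(x)^{−q(x)/p(x)}/ξ)^{p(x)/(p(x)−q(x))} dx ≤ 1} ≤ ε. -/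
open MeasureTheory ENNReal Real Filter Topology Set

noncomputable section

variable {N : ℕ}

lemma iInf_le_of_pos' {α : Type*} {f : α → ℝ} (h : 0 < ⨅ x, f x) (x : α) :
    ⨅ y, f y ≤ f x := by
  by_cases hb : BddBelow (Set.range f)
  · exact ciInf_le hb x
  · rw [Real.iInf_of_not_bddBelow hb] at h
    exact absurd h (lt_irrefl 0)

/-- Estimate `(2.4)`: under `(V)` and `1 ≪ q ≪ p`, for every `ε ∈ (0,1)` there is `R > 0`
such that the Luxemburg norm of `x ↦ V(x)^{-q(x)/p(x)}` with exponent `p(x)/(p(x)-q(x))`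
over `{|x| ≥ R}` is `≤ ε`. -/
theorem stmt5
    {N : ℕ} (hN : 2 ≤ N)
    (p q V : EucSp N → ℝ)
    -- exponents : p, q bounded measurable, 1 ≪ q ≪ p
    (hpm : Measurable p) (hpb : ∃ M, ∀ x, |p x| ≤ M)
    (hqm : Measurable q) (hqb : ∃ M, ∀ x, |q x| ≤ M)
    (h1q : Sll (fun _ => 1) q) (hqp : Sll q p)
    -- condition (V)
    (hVc : Continuous V) (hV0 : 0 < ⨅ x, V x)
    (hVint : ∫⁻ x, ENNReal.ofReal (V x ^ (-(q x) / (p x - q x))) < ⊤) :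
    ∀ ε : ℝ, 0 < ε → ε < 1 → ∃ R > (0:ℝ),
      luxNorm (fun x => p x / (p x - q x)) {x : EucSp N | R ≤ ‖x‖}
        (fun x => V x ^ (-(q x) / p x)) ≤ ε := by
  intro ε hε0 hε1
  obtain ⟨Mp, hMp⟩ := hpb
  have hMp0 : 0 ≤ Mp := le_trans (abs_nonneg _) (hMp 0)
  have hδ1 : 0 < ⨅ x, (q x - (fun _ => (1:ℝ)) x) := h1q
  have hδ2 : 0 < ⨅ x, (p x - q x) := hqp
  -- pointwise facts
  have hVx : ∀ x, 0 < V x := fun x => lt_of_lt_of_le hV0 (iInf_le_of_pos' hV0 x)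
  have hqx : ∀ x, 1 < q x := fun x => by
    have := iInf_le_of_pos' h1q x
    simp only at this
    linarith [lt_of_lt_of_le h1q this]
  have hpqx : ∀ x, q x < p x := fun x => by
    have := iInf_le_of_pos' hqp x
    linarith [lt_of_lt_of_le hqp this]
  have hpx : ∀ x, 0 < p x := fun x => lt_trans (lt_trans one_pos (hqx x)) (hpqx x)
  set δ2 := ⨅ x, (p x - q x) with hδ2def
  have hδ2le : ∀ x, δ2 ≤ p x - q x := fun x => iInf_le_of_pos' hqp x
  set M : ℝ := Mp / δ2 with hMdef
  have hrM : ∀ x, p x / (p x - q x) ≤ M := fun x =>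
    div_le_div₀ hMp0 (le_trans (le_abs_self _) (hMp x)) hδ2 (hδ2le x)
  have hεinv : (1:ℝ) ≤ ε⁻¹ := by
    rw [le_inv_comm₀ one_pos hε0]
    simpa using hε1.le
  set C : ℝ := ε⁻¹ ^ M with hCdef
  have hC0 : 0 ≤ C := Real.rpow_nonneg (by positivity) _
  set f : EucSp N → ℝ≥0∞ := fun x => ENNReal.ofReal (V x ^ (-(q x) / (p x - q x))) with hfdef
  -- pointwise bound
  have key : ∀ x : EucSp N,
      ENNReal.ofReal ((|V x ^ (-(q x) / p x)| / ε) ^ (p x / (p x - q x)))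
        ≤ ENNReal.ofReal C * f x := by
    intro x
    have hpq0 : 0 < p x - q x := by linarith [hpqx x]
    have habs : |V x ^ (-(q x) / p x)| = V x ^ (-(q x) / p x) :=
      abs_of_pos (Real.rpow_pos_of_pos (hVx x) _)
    have hVs : 0 ≤ V x ^ (-(q x) / p x) := (Real.rpow_pos_of_pos (hVx x) _).le
    have hmul : (-(q x) / p x) * (p x / (p x - q x)) = -(q x) / (p x - q x) := by
      rw [neg_div, neg_div, neg_mul, neg_inj, div_mul_div_comm, mul_comm (q x) (p x),
        mul_div_mul_left _ _ (hpx x).ne']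
    have hcalc : (|V x ^ (-(q x) / p x)| / ε) ^ (p x / (p x - q x))
        = V x ^ (-(q x) / (p x - q x)) * ε⁻¹ ^ (p x / (p x - q x)) := by
      rw [habs, Real.div_rpow hVs hε0.le, ← Real.rpow_mul (hVx x).le, hmul,
        Real.inv_rpow hε0.le, div_eq_mul_inv]
    rw [hcalc]
    have hle : V x ^ (-(q x) / (p x - q x)) * ε⁻¹ ^ (p x / (p x - q x))
        ≤ C * V x ^ (-(q x) / (p x - q x)) := by
      rw [mul_comm]
      exact mul_le_mul_of_nonneg_right
        (Real.rpow_le_rpow_of_exponent_le hεinv (hrM x))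
        (Real.rpow_nonneg (hVx x).le _)
    calc ENNReal.ofReal (V x ^ (-(q x) / (p x - q x)) * ε⁻¹ ^ (p x / (p x - q x)))
        ≤ ENNReal.ofReal (C * V x ^ (-(q x) / (p x - q x))) := ENNReal.ofReal_le_ofReal hle
      _ = ENNReal.ofReal C * f x := ENNReal.ofReal_mul hC0
  -- tail smallness via withDensity measure
  have hfm : Measurable f := by
    have hfe : f = fun x => ENNReal.ofReal (Real.exp (Real.log (V x) * (-(q x) / (p x - q x)))) :=
      funext fun x => by simp only [hfdef, Real.rpow_def_of_pos (hVx x)]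
    rw [hfe]
    exact (((Real.measurable_log.comp hVc.measurable).mul
      (hqm.neg.div (hpm.sub hqm))).exp).ennreal_ofReal
  set ν : Measure (EucSp N) := volume.withDensity f with hνdef
  set s : ℕ → Set (EucSp N) := fun n => {x | (n:ℝ) ≤ ‖x‖} with hsdef
  have hsm : ∀ n, MeasurableSet (s n) := fun n =>
    (isClosed_le continuous_const continuous_norm).measurableSet
  have hνs : ∀ n, ν (s n) = ∫⁻ x in s n, f x := fun n => withDensity_apply f (hsm n)
  have hνfin : ν univ ≠ ⊤ := by
    rw [withDensity_apply f MeasurableSet.univ, setLIntegral_univ]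
    exact hVint.ne
  have hanti : Antitone s := by
    intro m n hmn x hx
    simp only [hsdef, mem_setOf_eq] at *
    exact le_trans (Nat.cast_le.mpr hmn) hx
  have hiInter : ⋂ n, s n = ∅ := by
    ext x
    simp only [mem_iInter, mem_empty_iff_false, iff_false, not_forall]
    obtain ⟨n, hn⟩ := exists_nat_gt ‖x‖
    exact ⟨n, by simp [hsdef]; linarith⟩
  have htend : Tendsto (ν ∘ s) atTop (𝓝 0) := by
    have := tendsto_measure_iInter_atTop (μ := ν) (fun n => (hsm n).nullMeasurableSet)
      hanti ⟨0, lt_of_le_of_lt (measure_mono (subset_univ _)) hνfin.lt_top |>.ne⟩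
    rwa [hiInter, measure_empty] at this
  have hδpos : (0:ℝ≥0∞) < ENNReal.ofReal (ε ^ M) :=
    ENNReal.ofReal_pos.mpr (Real.rpow_pos_of_pos hε0 _)
  obtain ⟨n, hn⟩ := (htend.eventually (Iio_mem_nhds hδpos)).exists
  refine ⟨(n:ℝ) + 1, by positivity, ?_⟩
  -- ε is in the defining set
  have hsubset : {x : EucSp N | (n:ℝ) + 1 ≤ ‖x‖} ⊆ s n := fun x hx => by
    simp only [hsdef, mem_setOf_eq] at *
    linarith
  have hmem : ε ∈ {ξ : ℝ | 0 < ξ ∧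
      ∫⁻ x in {x : EucSp N | (n:ℝ) + 1 ≤ ‖x‖},
        ENNReal.ofReal ((|V x ^ (-(q x) / p x)| / ξ) ^ (p x / (p x - q x))) ≤ 1} := by
    refine ⟨hε0, ?_⟩
    calc ∫⁻ x in {x : EucSp N | (n:ℝ) + 1 ≤ ‖x‖},
          ENNReal.ofReal ((|V x ^ (-(q x) / p x)| / ε) ^ (p x / (p x - q x)))
        ≤ ∫⁻ x in {x : EucSp N | (n:ℝ) + 1 ≤ ‖x‖}, ENNReal.ofReal C * f x :=
          lintegral_mono fun x => key x
      _ = ENNReal.ofReal C * ∫⁻ x in {x : EucSp N | (n:ℝ) + 1 ≤ ‖x‖}, f x :=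
          lintegral_const_mul' _ _ ENNReal.ofReal_ne_top
      _ ≤ ENNReal.ofReal C * ∫⁻ x in s n, f x :=
          mul_le_mul_right (lintegral_mono_set hsubset) _
      _ ≤ ENNReal.ofReal C * ENNReal.ofReal (ε ^ M) := by
          apply mul_le_mul_right
          rw [← hνs n]
          exact (hn).le
      _ = 1 := by
          rw [← ENNReal.ofReal_mul hC0, hCdef, ← Real.mul_rpow (by positivity) hε0.le,
            inv_mul_cancel₀ hε0.ne', Real.one_rpow, ENNReal.ofReal_one]
  exact csInf_le ⟨0, fun ξ hξ => hξ.1.le⟩ hmem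

end
end

section
/- Assume (V) and 1≪q≪p≪N. Then for every ε ∈ (0,1) there exists R > 0 such that for every u ∈ X one has ∫_{|x|≥R} |u(x)|^{q(x)} dx ≤ 2ε(1 + ‖u‖^{p_+} + ‖u‖^{p_-})^{q_+/p_-}. -/
open MeasureTheory ENNReal Real Filter Topology Set

noncomputable section

variable {N : ℕ}

private lemma iInfPos_le {α : Type*} [Nonempty α] {f : α → ℝ} (h : 0 < ⨅ x, f x) (x : α) :
    ⨅ y, f y ≤ f x := by
  by_cases hb : BddBelow (Set.range f)
  · exact ciInf_le hb x
  · rw [Real.iInf_of_not_bddBelow hb] at h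
    exact absurd h (lt_irrefl 0)

set_option maxHeartbeats 2000000 in
/-- Estimate `(2.6)`: under `(V)` and `1 ≪ q ≪ p ≪ N`, for every `ε ∈ (0,1)` there is
`R > 0` such that every `u ∈ X` satisfies
`∫_{|x|≥R} |u|^{q(x)} ≤ 2ε (1 + ‖u‖^{pS} + ‖u‖^{pI})^{qS/pI}`. -/
theorem stmt7
    {N : ℕ} (hN : 2 ≤ N)
    (p q V : EucSp N → ℝ)
    -- exponents : p Lipschitz, q bounded measurable, 1 ≪ q ≪ p ≪ N
    (hLip : ∃ K : NNReal, LipschitzWith K p)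
    (hqm : Measurable q) (hqb : ∃ M, ∀ x, |q x| ≤ M)
    (h1q : Sll (fun _ => 1) q) (hqp : Sll q p) (hpN : Sll p (fun _ => (N : ℝ)))
    -- condition (V)
    (hVc : Continuous V) (hV0 : 0 < ⨅ x, V x)
    (hVint : ∫⁻ x, ENNReal.ofReal (V x ^ (-(q x) / (p x - q x))) < ⊤) :
    ∀ ε : ℝ, 0 < ε → ε < 1 → ∃ R > (0:ℝ),
      ∀ (u : EucSp N → ℝ) (w : EucSp N → EucSp N), MemX p V u w →
        ∫⁻ x in {x : EucSp N | R ≤ ‖x‖}, ENNReal.ofReal (|u x| ^ q x)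
          ≤ ENNReal.ofReal (2 * ε *
              (1 + xnorm p V u w ^ (⨆ x, p x) + xnorm p V u w ^ (⨅ x, p x))
                ^ ((⨆ x, q x) / (⨅ x, p x))) := by
  intro ε hε hε1
  obtain ⟨Mq, hMq⟩ := hqb
  -- pointwise bounds coming from the `Sll` hypotheses
  have hVpos : ∀ x, 0 < V x := fun x => lt_of_lt_of_le hV0 (iInfPos_le hV0 x)
  have hq1 : ∀ x, 1 < q x := by
    intro x
    have h : 0 < q x - (fun _ : EucSp N => (1:ℝ)) x := lt_of_lt_of_le h1q (iInfPos_le h1q x)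
    have h' : 0 < q x - 1 := h
    linarith
  set δ2 := ⨅ x, (p x - q x) with hδ2def
  have hδ2pos : 0 < δ2 := hqp
  have hδ2le : ∀ x, δ2 ≤ p x - q x := fun x => iInfPos_le hqp x
  have hpleN : ∀ x, p x ≤ (N:ℝ) := by
    intro x
    have h : 0 < (fun _ : EucSp N => (N:ℝ)) x - p x := lt_of_lt_of_le hpN (iInfPos_le hpN x)
    have h' : 0 < (N:ℝ) - p x := h
    linarith
  have hNpos : (0:ℝ) < N := by
    have : (2:ℝ) ≤ N := by exact_mod_cast hN
    linarith
  set M' := (N:ℝ) / δ2 with hM'def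
  have hM'pos : 0 < M' := div_pos hNpos hδ2pos
  -- sup / inf of the exponents
  have hqA : BddAbove (Set.range q) := by
    refine ⟨Mq, ?_⟩
    rintro y ⟨x, rfl⟩
    exact (le_abs_self _).trans (hMq x)
  set qS := ⨆ x, q x with hqsupdef
  have hqle : ∀ x, q x ≤ qS := fun x => le_ciSup hqA x
  have hqSpos : 0 < qS := lt_of_lt_of_le (lt_trans one_pos (hq1 0)) (hqle 0)
  have hp0 : ∀ x, 0 < p x := fun x => by linarith [hq1 x, hδ2le x]
  have hpB : BddBelow (Set.range p) := by
    refine ⟨1, ?_⟩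
    rintro y ⟨x, rfl⟩
    linarith [hq1 x, hδ2le x]
  set pI := ⨅ x, p x with hpinfdef
  have hpIle : ∀ x, pI ≤ p x := fun x => ciInf_le hpB x
  have h1pI : 1 ≤ pI := le_ciInf fun x => by linarith [hq1 x, hδ2le x]
  have hpIpos : 0 < pI := by linarith
  have hpA : BddAbove (Set.range p) := by
    refine ⟨N, ?_⟩
    rintro y ⟨x, rfl⟩
    exact hpleN x
  set pS := ⨆ x, p x with hpsupdef
  have hple : ∀ x, p x ≤ pS := fun x => le_ciSup hpA x
  have hpSpos : 0 < pS := lt_of_lt_of_le (hp0 0) (hple 0)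
  set e := qS / pI with hedef
  have hepos : 0 < e := div_pos hqSpos hpIpos
  -- Step B : choice of R using condition (V)
  set Vf : EucSp N → ℝ≥0∞ := fun x => ENNReal.ofReal (V x ^ (-(q x) / (p x - q x))) with hVfdef
  set s : ℕ → Set (EucSp N) := fun n => {x : EucSp N | (n:ℝ) ≤ ‖x‖} with hsdef
  have hsm : ∀ n : ℕ, MeasurableSet (s n) := fun n =>
    (isClosed_le continuous_const continuous_norm).measurableSet
  have hiInter : ⋂ n : ℕ, s n = ∅ := by
    ext x
    simp only [hsdef, mem_iInter, mem_setOf_eq, mem_empty_iff_false, iff_false]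
    push_neg
    obtain ⟨n, hn⟩ := exists_nat_gt ‖x‖
    exact ⟨n, hn⟩
  set μ := (volume : Measure (EucSp N)).withDensity Vf with hμdef
  have hμs : ∀ n, μ (s n) = ∫⁻ x in s n, Vf x := fun n => withDensity_apply Vf (hsm n)
  have hμfin : μ (s 0) ≠ ⊤ := by
    rw [hμs 0]
    exact ((setLIntegral_le_lintegral _ _).trans_lt hVint).ne
  have hanti : Antitone s := by
    intro m n hmn x hx
    have : (m:ℝ) ≤ (n:ℝ) := by exact_mod_cast hmn
    exact le_trans this hx
  have htd : Tendsto (fun n : ℕ => μ (s n)) atTop (𝓝 0) := by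
    have h := tendsto_measure_iInter_atTop (μ := μ) (s := s)
      (fun n => (hsm n).nullMeasurableSet) hanti ⟨0, hμfin⟩
    rw [hiInter, measure_empty] at h
    exact h
  have hεM' : (0:ℝ≥0∞) < ENNReal.ofReal (ε ^ M') :=
    ENNReal.ofReal_pos.mpr (Real.rpow_pos_of_pos hε _)
  obtain ⟨n, hn⟩ := (htd.eventually_lt_const hεM').exists
  refine ⟨(n:ℝ) + 1, by positivity, ?_⟩
  intro u w hu
  obtain ⟨hum, hwg, hmod⟩ := hu
  -- the tail integral of `Vf` is small
  have htail : ∫⁻ x in {x : EucSp N | (n:ℝ) + 1 ≤ ‖x‖}, Vf x ≤ ENNReal.ofReal (ε ^ M') := by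
    calc ∫⁻ x in {x : EucSp N | (n:ℝ) + 1 ≤ ‖x‖}, Vf x
        ≤ ∫⁻ x in s n, Vf x := by
          refine lintegral_mono_set ?_
          intro x hx
          simp only [hsdef, mem_setOf_eq] at hx ⊢
          linarith
      _ = μ (s n) := (hμs n).symm
      _ ≤ ENNReal.ofReal (ε ^ M') := hn.le
  -- measurability facts
  have hpc : Continuous p := hLip.choose_spec.continuous
  have hpm : Measurable p := hpc.measurable
  have hg1m : Measurable fun x => ENNReal.ofReal (V x * |u x| ^ p x) :=
    ((hVc.measurable).mul (hum.abs.pow hpm)).ennreal_ofReal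
  have hwm : AEMeasurable (fun x => ‖w x‖) (volume : Measure (EucSp N)) :=
    hwg.2.1.aestronglyMeasurable.norm.aemeasurable
  -- the defining set of the norm is nonempty
  set S := {ξ : ℝ | 0 < ξ ∧
      ∫⁻ x, (ENNReal.ofReal ((‖w x‖ / ξ) ^ p x) + ENNReal.ofReal (V x * (|u x| / ξ) ^ p x)) ≤ 1}
    with hSdef
  have hxnS : xnorm p V u w = sInf S := rfl
  have hSne : S.Nonempty := by
    set F : ℕ → EucSp N → ℝ≥0∞ := fun k x =>
      ENNReal.ofReal ((‖w x‖ / ((k:ℝ) + 1)) ^ p x)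
        + ENNReal.ofReal (V x * (|u x| / ((k:ℝ) + 1)) ^ p x) with hFdef
    have hFm : ∀ k, AEMeasurable (F k) (volume : Measure (EucSp N)) := by
      intro k
      exact (((hwm.div_const _).pow hpm.aemeasurable).ennreal_ofReal).add
        ((hVc.measurable.aemeasurable.mul
          ((hum.abs.aemeasurable.div_const _).pow hpm.aemeasurable)).ennreal_ofReal)
    have hFb : ∀ k, F k ≤ᵐ[(volume : Measure (EucSp N))]
        fun x => ENNReal.ofReal (‖w x‖ ^ p x) + ENNReal.ofReal (V x * |u x| ^ p x) := by
      intro k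
      refine Eventually.of_forall fun x => ?_
      have h1k : (1:ℝ) ≤ (k:ℝ) + 1 := by
        have : (0:ℝ) ≤ (k:ℝ) := Nat.cast_nonneg k
        linarith
      exact add_le_add
        (ENNReal.ofReal_le_ofReal (Real.rpow_le_rpow (by positivity)
          (div_le_self (norm_nonneg _) h1k) (hp0 x).le))
        (ENNReal.ofReal_le_ofReal (mul_le_mul_of_nonneg_left (Real.rpow_le_rpow (by positivity)
          (div_le_self (abs_nonneg _) h1k) (hp0 x).le) (hVpos x).le))
    have hlim : ∀ᵐ x ∂(volume : Measure (EucSp N)),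
        Tendsto (fun k => F k x) atTop (𝓝 0) := by
      refine Eventually.of_forall fun x => ?_
      have hb : ∀ c : ℝ, Tendsto (fun k : ℕ => c / ((k:ℝ) + 1)) atTop (𝓝 0) := fun c =>
        Tendsto.div_atTop tendsto_const_nhds
          (tendsto_atTop_add_const_right _ 1 tendsto_natCast_atTop_atTop)
      have hρc : ContinuousAt (fun t : ℝ => t ^ p x) 0 :=
        Real.continuousAt_rpow_const 0 (p x) (Or.inr (hp0 x).le)
      have h1 : Tendsto (fun k : ℕ => (‖w x‖ / ((k:ℝ) + 1)) ^ p x) atTop (𝓝 0) := by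
        have := hρc.tendsto.comp (hb ‖w x‖)
        simpa [Function.comp_def, Real.zero_rpow (hp0 x).ne'] using this
      have h2 : Tendsto (fun k : ℕ => V x * (|u x| / ((k:ℝ) + 1)) ^ p x) atTop (𝓝 0) := by
        have := (hρc.tendsto.comp (hb |u x|)).const_mul (V x)
        simpa [Function.comp_def, Real.zero_rpow (hp0 x).ne'] using this
      have := ((ENNReal.continuous_ofReal.tendsto _).comp h1).add
        ((ENNReal.continuous_ofReal.tendsto _).comp h2)
      simpa [Function.comp_def] using this
    have hdct := tendsto_lintegral_of_dominated_convergence' _ hFm hFb hmod.ne hlim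
    simp only [lintegral_zero] at hdct
    obtain ⟨k, hk⟩ := (hdct.eventually_lt_const (by norm_num : (0:ℝ≥0∞) < 1)).exists
    exact ⟨(k:ℝ) + 1, by positivity, hk.le⟩
  have hSbdd : BddBelow S := ⟨0, fun ξ hξ => hξ.1.le⟩
  set xn := xnorm p V u w with hxndef
  have hxn0 : 0 ≤ xn := by
    rw [hxnS]
    exact le_csInf hSne fun ξ hξ => hξ.1.le
  -- the modular of `u` is controlled by the norm
  set ρ := ∫⁻ x, ENNReal.ofReal (V x * |u x| ^ p x) with hρdef
  have hmem : ∀ ξ ∈ S, ρ ≤ ENNReal.ofReal (ξ ^ pS + ξ ^ pI) := by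
    intro ξ hξ
    obtain ⟨hξ0, hξI⟩ := hξ
    have hpt : ∀ x, ENNReal.ofReal (V x * |u x| ^ p x) ≤
        ENNReal.ofReal (ξ ^ pS + ξ ^ pI) *
          (ENNReal.ofReal ((‖w x‖ / ξ) ^ p x) + ENNReal.ofReal (V x * (|u x| / ξ) ^ p x)) := by
      intro x
      have h1 : V x * (|u x| / ξ) ^ p x * ξ ^ p x = V x * |u x| ^ p x := by
        rw [mul_assoc, ← Real.mul_rpow (by positivity) hξ0.le, div_mul_cancel₀ _ hξ0.ne']
      have h2 : ξ ^ p x ≤ ξ ^ pS + ξ ^ pI := by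
        rcases le_or_gt 1 ξ with h | h
        · have h3 := Real.rpow_le_rpow_of_exponent_le h (hple x)
          have h4 : (0:ℝ) ≤ ξ ^ pI := Real.rpow_nonneg hξ0.le _
          linarith
        · have h3 := Real.rpow_le_rpow_of_exponent_ge hξ0 h.le (hpIle x)
          have h4 : (0:ℝ) ≤ ξ ^ pS := Real.rpow_nonneg hξ0.le _
          linarith
      calc ENNReal.ofReal (V x * |u x| ^ p x)
          ≤ ENNReal.ofReal ((ξ ^ pS + ξ ^ pI) * (V x * (|u x| / ξ) ^ p x)) := by
            apply ENNReal.ofReal_le_ofReal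
            rw [← h1]
            calc V x * (|u x| / ξ) ^ p x * ξ ^ p x
                ≤ V x * (|u x| / ξ) ^ p x * (ξ ^ pS + ξ ^ pI) :=
                  mul_le_mul_of_nonneg_left h2
                    (mul_nonneg (hVpos x).le (Real.rpow_nonneg (by positivity) _))
              _ = (ξ ^ pS + ξ ^ pI) * (V x * (|u x| / ξ) ^ p x) := mul_comm _ _
        _ = ENNReal.ofReal (ξ ^ pS + ξ ^ pI) * ENNReal.ofReal (V x * (|u x| / ξ) ^ p x) :=
            ENNReal.ofReal_mul (by positivity)
        _ ≤ _ := mul_le_mul_right le_add_self _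
    calc ρ ≤ ∫⁻ x, ENNReal.ofReal (ξ ^ pS + ξ ^ pI) *
          (ENNReal.ofReal ((‖w x‖ / ξ) ^ p x) + ENNReal.ofReal (V x * (|u x| / ξ) ^ p x)) :=
        lintegral_mono hpt
      _ = ENNReal.ofReal (ξ ^ pS + ξ ^ pI) * ∫⁻ x,
          (ENNReal.ofReal ((‖w x‖ / ξ) ^ p x) + ENNReal.ofReal (V x * (|u x| / ξ) ^ p x)) :=
        lintegral_const_mul' _ _ ENNReal.ofReal_ne_top
      _ ≤ ENNReal.ofReal (ξ ^ pS + ξ ^ pI) * 1 := mul_le_mul_right hξI _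
      _ = ENNReal.ofReal (ξ ^ pS + ξ ^ pI) := mul_one _
  have hρle : ρ ≤ ENNReal.ofReal (xn ^ pS + xn ^ pI) := by
    obtain ⟨ξs, _, htendS, hmemS⟩ := exists_seq_tendsto_sInf hSne hSbdd
    have htendS' : Tendsto ξs atTop (𝓝 xn) := by rw [hxnS]; exact htendS
    have hT1 : Tendsto (fun k => ξs k ^ pS) atTop (𝓝 (xn ^ pS)) := by
      simpa [Function.comp_def] using
        (Real.continuousAt_rpow_const xn pS (Or.inr hpSpos.le)).tendsto.comp htendS'
    have hT2 : Tendsto (fun k => ξs k ^ pI) atTop (𝓝 (xn ^ pI)) := by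
      simpa [Function.comp_def] using
        (Real.continuousAt_rpow_const xn pI (Or.inr hpIpos.le)).tendsto.comp htendS'
    have hT : Tendsto (fun k => ENNReal.ofReal (ξs k ^ pS + ξs k ^ pI)) atTop
        (𝓝 (ENNReal.ofReal (xn ^ pS + xn ^ pI))) := by
      simpa [Function.comp_def] using (ENNReal.continuous_ofReal.tendsto _).comp (hT1.add hT2)
    exact ge_of_tendsto hT (Eventually.of_forall fun k => hmem _ (hmemS k))
  -- main constants
  set A := 1 + xn ^ pS + xn ^ pI with hAdef
  have hA1 : 1 ≤ A := by
    have h4 : (0:ℝ) ≤ xn ^ pS := Real.rpow_nonneg hxn0 _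
    have h5 : (0:ℝ) ≤ xn ^ pI := Real.rpow_nonneg hxn0 _
    rw [hAdef]; linarith
  have hApos : 0 < A := by linarith
  set a := A ^ e with hadef
  have ha1 : 1 ≤ a := by
    calc (1:ℝ) = 1 ^ e := (Real.one_rpow e).symm
      _ ≤ A ^ e := Real.rpow_le_rpow zero_le_one hA1 hepos.le
  have ha0 : 0 < a := lt_of_lt_of_le one_pos ha1
  -- the key pointwise inequality
  have key : ∀ x, |u x| ^ q x ≤ a * ε *
      ((V x * |u x| ^ p x) * A⁻¹ + V x ^ (-(q x) / (p x - q x)) * ε ^ (-M')) := by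
    intro x
    have hQ1 : 1 < q x := hq1 x
    have hQ0 : 0 < q x := by linarith
    have hPQ : 0 < p x - q x := by linarith [hδ2le x, hδ2pos]
    have hP0 : 0 < p x := hp0 x
    have hv : 0 < V x := hVpos x
    have ht : 0 ≤ |u x| := abs_nonneg _
    have hconj : (p x / q x).HolderConjugate (p x / (p x - q x)) := by
      rw [Real.holderConjugate_iff]
      constructor
      · exact (one_lt_div hQ0).mpr (by linarith)
      · rw [inv_div, inv_div, ← add_div, div_eq_one_iff_eq hP0.ne']
        ring
    set X := V x ^ (q x / p x) * |u x| ^ q x / a with hXdef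
    set Y := V x ^ (-(q x / p x)) / ε with hYdef
    have hvc : (0:ℝ) < V x ^ (q x / p x) := Real.rpow_pos_of_pos hv _
    have hX0 : 0 ≤ X := by rw [hXdef]; positivity
    have hY0 : 0 ≤ Y := by
      rw [hYdef]
      have := Real.rpow_pos_of_pos hv (-(q x / p x))
      positivity
    have hXY : X * Y = |u x| ^ q x / (a * ε) := by
      rw [hXdef, hYdef, Real.rpow_neg hv.le]
      field_simp
    have hyoung : X * Y ≤ X ^ (p x / q x) + Y ^ (p x / (p x - q x)) := by
      refine (Real.young_inequality_of_nonneg hX0 hY0 hconj).trans (add_le_add ?_ ?_)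
      · exact div_le_self (Real.rpow_nonneg hX0 _) hconj.lt.le
      · exact div_le_self (Real.rpow_nonneg hY0 _) ((one_le_div hPQ).mpr (by linarith))
    have hXpow : X ^ (p x / q x) ≤ V x * |u x| ^ p x * A⁻¹ := by
      have hXeq : X ^ (p x / q x) = V x * |u x| ^ p x / a ^ (p x / q x) := by
        rw [hXdef, Real.div_rpow (by positivity) ha0.le,
          Real.mul_rpow hvc.le (Real.rpow_nonneg ht _),
          ← Real.rpow_mul hv.le, ← Real.rpow_mul ht]
        have e1 : q x / p x * (p x / q x) = 1 := by field_simp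
        have e2 : q x * (p x / q x) = p x := by field_simp
        rw [e1, e2, Real.rpow_one]
      rw [hXeq]
      have haA : A ≤ a ^ (p x / q x) := by
        rw [hadef, ← Real.rpow_mul hApos.le]
        have h1 : pI / qS ≤ p x / q x := div_le_div₀ hP0.le (hpIle x) hQ0 (hqle x)
        have h2 : e * (pI / qS) = 1 := by rw [hedef]; field_simp
        have h3 : 1 ≤ e * (p x / q x) := by nlinarith [hepos]
        calc A = A ^ (1:ℝ) := (Real.rpow_one A).symm
          _ ≤ A ^ (e * (p x / q x)) := Real.rpow_le_rpow_of_exponent_le hA1 h3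
      calc V x * |u x| ^ p x / a ^ (p x / q x) ≤ V x * |u x| ^ p x / A := by
            gcongr
        _ = V x * |u x| ^ p x * A⁻¹ := div_eq_mul_inv _ _
    have hYpow : Y ^ (p x / (p x - q x)) ≤ V x ^ (-(q x) / (p x - q x)) * ε ^ (-M') := by
      have hexp : -(q x / p x) * (p x / (p x - q x)) = -(q x) / (p x - q x) := by
        field_simp
      have hYeq : Y ^ (p x / (p x - q x)) =
          V x ^ (-(q x) / (p x - q x)) * (ε ^ (p x / (p x - q x)))⁻¹ := by
        rw [hYdef, Real.div_rpow (Real.rpow_nonneg hv.le _) hε.le,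
          ← Real.rpow_mul hv.le, hexp, div_eq_mul_inv]
      rw [hYeq]
      refine mul_le_mul_of_nonneg_left ?_ (Real.rpow_nonneg hv.le _)
      rw [← Real.rpow_neg hε.le]
      refine Real.rpow_le_rpow_of_exponent_ge hε hε1.le ?_
      have h5 : p x / (p x - q x) ≤ M' := by
        rw [hM'def]
        exact div_le_div₀ hNpos.le (hpleN x) hδ2pos (hδ2le x)
      linarith
    have ht' : |u x| ^ q x = a * ε * (X * Y) := by
      rw [hXY]
      field_simp
    rw [ht']
    calc a * ε * (X * Y) ≤ a * ε * (X ^ (p x / q x) + Y ^ (p x / (p x - q x))) :=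
          mul_le_mul_of_nonneg_left hyoung (by positivity)
      _ ≤ a * ε * ((V x * |u x| ^ p x) * A⁻¹ + V x ^ (-(q x) / (p x - q x)) * ε ^ (-M')) :=
          mul_le_mul_of_nonneg_left (add_le_add hXpow hYpow) (by positivity)
  -- pass to `ℝ≥0∞`
  have hAinv : (0:ℝ) ≤ A⁻¹ := inv_nonneg.mpr hApos.le
  have keyE : ∀ x, ENNReal.ofReal (|u x| ^ q x) ≤ ENNReal.ofReal (a * ε) *
      (ENNReal.ofReal (V x * |u x| ^ p x) * ENNReal.ofReal A⁻¹
        + Vf x * ENNReal.ofReal (ε ^ (-M'))) := by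
    intro x
    have hv := hVpos x
    have ht : (0:ℝ) ≤ |u x| := abs_nonneg _
    calc ENNReal.ofReal (|u x| ^ q x)
        ≤ ENNReal.ofReal (a * ε * ((V x * |u x| ^ p x) * A⁻¹
            + V x ^ (-(q x) / (p x - q x)) * ε ^ (-M'))) := ENNReal.ofReal_le_ofReal (key x)
      _ = _ := by
        simp only [hVfdef]
        rw [ENNReal.ofReal_mul (by positivity),
          ENNReal.ofReal_add (by positivity) (by positivity),
          ENNReal.ofReal_mul (by positivity), ENNReal.ofReal_mul (Real.rpow_nonneg hv.le _),
          ENNReal.ofReal_mul (mul_nonneg hv.le (Real.rpow_nonneg ht _))]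
  -- integrate
  calc ∫⁻ x in {x : EucSp N | (n:ℝ) + 1 ≤ ‖x‖}, ENNReal.ofReal (|u x| ^ q x)
      ≤ ∫⁻ x in {x : EucSp N | (n:ℝ) + 1 ≤ ‖x‖}, ENNReal.ofReal (a * ε) *
          (ENNReal.ofReal (V x * |u x| ^ p x) * ENNReal.ofReal A⁻¹
            + Vf x * ENNReal.ofReal (ε ^ (-M'))) := lintegral_mono fun x => keyE x
    _ = ENNReal.ofReal (a * ε) * ∫⁻ x in {x : EucSp N | (n:ℝ) + 1 ≤ ‖x‖},
          (ENNReal.ofReal (V x * |u x| ^ p x) * ENNReal.ofReal A⁻¹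
            + Vf x * ENNReal.ofReal (ε ^ (-M'))) :=
        lintegral_const_mul' _ _ ENNReal.ofReal_ne_top
    _ = ENNReal.ofReal (a * ε) *
          ((∫⁻ x in {x : EucSp N | (n:ℝ) + 1 ≤ ‖x‖},
            ENNReal.ofReal (V x * |u x| ^ p x) * ENNReal.ofReal A⁻¹)
          + ∫⁻ x in {x : EucSp N | (n:ℝ) + 1 ≤ ‖x‖}, Vf x * ENNReal.ofReal (ε ^ (-M'))) := by
        rw [lintegral_add_left (hg1m.mul_const _)]
    _ = ENNReal.ofReal (a * ε) *
          ((∫⁻ x in {x : EucSp N | (n:ℝ) + 1 ≤ ‖x‖},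
            ENNReal.ofReal (V x * |u x| ^ p x)) * ENNReal.ofReal A⁻¹
          + (∫⁻ x in {x : EucSp N | (n:ℝ) + 1 ≤ ‖x‖}, Vf x) * ENNReal.ofReal (ε ^ (-M'))) := by
        rw [lintegral_mul_const' _ _ ENNReal.ofReal_ne_top,
          lintegral_mul_const' _ _ ENNReal.ofReal_ne_top]
    _ ≤ ENNReal.ofReal (a * ε) *
          (ENNReal.ofReal (xn ^ pS + xn ^ pI) * ENNReal.ofReal A⁻¹
          + ENNReal.ofReal (ε ^ M') * ENNReal.ofReal (ε ^ (-M'))) := by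
        gcongr
        all_goals first
          | exact (setLIntegral_le_lintegral _ _).trans hρle
          | exact htail
    _ ≤ ENNReal.ofReal (a * ε) * (1 + 1) := by
        gcongr
        · rw [← ENNReal.ofReal_mul (by positivity), ← ENNReal.ofReal_one]
          apply ENNReal.ofReal_le_ofReal
          have h6 : xn ^ pS + xn ^ pI ≤ A := by rw [hAdef]; linarith
          calc (xn ^ pS + xn ^ pI) * A⁻¹ ≤ A * A⁻¹ :=
                mul_le_mul_of_nonneg_right h6 hAinv
            _ = 1 := mul_inv_cancel₀ hApos.ne'
        · rw [← ENNReal.ofReal_mul (by positivity), ← Real.rpow_add hε, ← ENNReal.ofReal_one]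
          apply ENNReal.ofReal_le_ofReal
          rw [add_neg_cancel, Real.rpow_zero]
    _ = ENNReal.ofReal (2 * ε * a) := by
        rw [show ((1:ℝ≥0∞) + 1) = ENNReal.ofReal 2 by norm_num,
          ← ENNReal.ofReal_mul (by positivity)]
        congr 1
        ring

end
end
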